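/- The adjoint integral matrix A† = W^{−1} A^T W_{2:N} ∈ ℝ^{N×(N−1)} (columns indexed j = 2,…,N) satisfies: A†_{i,j} = ∫_{τ_i}^{1} M_j(τ) dτ − w_N M_j(1) for all i = 1,…,N and j = 2,…,N−1, and A†_{i,N} = w_N for all i = 1,…,N. -/

import Mathlib

open Polynomial

/-- `lagL τ i` is the `i`-th Lagrange basis polynomial (of degree `N - 1`)
for the nodes `τ 0, …, τ (N-1)`, satisfying `(lagL τ i).eval (τ j) = δᵢⱼ`. -/
noncomputable def lagL {N : ℕ} (τ : Fin N → ℝ) (i : Fin N) : ℝ[X] :=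
  Lagrange.basis Finset.univ τ i

/-- `lagLp τ` is the polynomial `L_p(x) = ∏ᵢ (x - τᵢ)`. -/
noncomputable def lagLp {N : ℕ} (τ : Fin N → ℝ) : ℝ[X] :=
  ∏ i, (X - C (τ i))

/-- The differentiation matrix `D`, with `D i j = L_j'(τ i)`. -/
noncomputable def matD {N : ℕ} (τ : Fin N → ℝ) : Matrix (Fin N) (Fin N) ℝ :=
  fun i j => (derivative (lagL τ j)).eval (τ i)

/-- The vector `D_p`, with `(D_p) i = L_p'(τ i)`. -/
noncomputable def vecDp {N : ℕ} (τ : Fin N → ℝ) : Fin N → ℝ :=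
  fun i => (derivative (lagLp τ)).eval (τ i)

/-- Columns `2, …, N+1` (in 1-based numbering) of the augmented differentiation
matrix `D̃ = [D  D_p]`: column `j` (0-based, `j < N - 1`) is column `j + 1` of `D`,
and the last column is `D_p`. -/
noncomputable def matDtil2 {N : ℕ} (τ : Fin N → ℝ) : Matrix (Fin N) (Fin N) ℝ :=
  fun i j => if h : (j : ℕ) + 1 < N then matD τ i ⟨(j : ℕ) + 1, h⟩ else vecDp τ i

/-- The quadrature rule with nodes `τ` and weights `w` integrates exactly all
polynomials of degree at most `2 * N - 3` over `[-1, 1]`. -/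
def IsQuadrature {N : ℕ} (τ : Fin N → ℝ) (w : Fin N → ℝ) : Prop :=
  ∀ p : ℝ[X], p.natDegree ≤ 2 * N - 3 →
    ∑ i, w i * p.eval (τ i) = ∫ t in (-1 : ℝ)..1, p.eval t

/-- The integration matrix `A` with rows indexed (0-based) by `i : Fin (N-1)`
corresponding to the node `τ (i+1)`: `A i j = ∫_{-1}^{τ (i+1)} L_j(t) dt`. -/
noncomputable def matA {N : ℕ} (τ : Fin N → ℝ) : Matrix (Fin (N - 1)) (Fin N) ℝ :=
  fun i j => ∫ t in (-1 : ℝ)..(τ ⟨(i : ℕ) + 1, by have := i.isLt; omega⟩), (lagL τ j).eval t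

/-- The row vector `A_p`, with `(A_p) j = (1/N) ∏_{k ≠ j} 1 / (τ j - τ k)`. -/
noncomputable def rowAp {N : ℕ} (τ : Fin N → ℝ) : Fin N → ℝ :=
  fun j => (1 / (N : ℝ)) * ∏ k ∈ Finset.univ.erase j, (τ j - τ k)⁻¹

/-- The matrix `Ã` obtained by stacking `A` on top of the row vector `A_p`. -/
noncomputable def matAtil {N : ℕ} (τ : Fin N → ℝ) : Matrix (Fin N) (Fin N) ℝ :=
  fun i j => if h : (i : ℕ) + 1 < N then matA τ ⟨(i : ℕ), by omega⟩ j else rowAp τ j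

/-- The adjoint integration matrix `A† = W⁻¹ Aᵀ W_{2:N}`, with columns indexed
(0-based) by `j : Fin (N-1)` corresponding to the node `τ (j+1)`. -/
noncomputable def matAdag {N : ℕ} (τ : Fin N → ℝ) (w : Fin N → ℝ) :
    Matrix (Fin N) (Fin (N - 1)) ℝ :=
  fun i j => (w i)⁻¹ * matA τ j i * w ⟨(j : ℕ) + 1, by have := j.isLt; omega⟩

/-- `polyM τ k` is the Lagrange basis polynomial (of degree `N - 3`) for the
interior nodes `τ 1, …, τ (N-2)`, satisfying `(polyM τ k).eval (τ m) = δₖₘ`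
for interior indices `m`. -/
noncomputable def polyM {N : ℕ} (τ : Fin N → ℝ) (k : Fin N) : ℝ[X] :=
  Lagrange.basis (Finset.univ.filter fun m : Fin N => 0 < (m : ℕ) ∧ (m : ℕ) < N - 1) τ k

/-- The polynomial `λ(x) = ∑ᵢ (A† r)ᵢ Lᵢ(x)`. -/
noncomputable def lamP {N : ℕ} (τ : Fin N → ℝ) (w : Fin N → ℝ) (r : Fin (N - 1) → ℝ) : ℝ[X] :=
  ∑ i, C ((matAdag τ w).mulVec r i) * lagL τ i

/-! Put `qᵢ(x) = ∫₋₁ˣ Lᵢ` and `Q(x) = ∫ₓ¹ Mₖ`, so that `A†ᵢₖ = qᵢ(τₖ) wₖ / wᵢ`. The quadrature rule is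
exact on `Q Lᵢ` and on `Mₖ qᵢ` (both of degree `2N - 3`). Hence `wᵢ Q(τᵢ) = ∫₋₁¹ Q Lᵢ`, which
integration by parts (with `Q(1) = qᵢ(-1) = 0`) turns into `∫₋₁¹ Mₖ qᵢ`. Applying the rule to
`Mₖ qᵢ`, only the nodes `τₖ` and `τ_N = 1` contribute, and `qᵢ(1) = ∫₋₁¹ Lᵢ = wᵢ`. The last
column is the same computation with `τₖ` replaced by `τ_N = 1`. -/

namespace Polynomial

noncomputable def antideriv (p : ℝ[X]) : ℝ[X] :=
  p.sum fun n a => C (a / (n + 1)) * X ^ (n + 1)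

theorem derivative_antideriv (p : ℝ[X]) : derivative (antideriv p) = p := by
  rw [antideriv, Polynomial.sum, map_sum]
  conv_rhs => rw [← p.sum_C_mul_X_pow_eq]
  refine Finset.sum_congr rfl fun n _ => ?_
  rw [derivative_C_mul, derivative_X_pow, ← mul_assoc, ← C_mul, Nat.add_sub_cancel]
  congr 2
  push_cast
  field_simp

theorem natDegree_antideriv_le (p : ℝ[X]) : (antideriv p).natDegree ≤ p.natDegree + 1 :=
  natDegree_sum_le_of_forall_le _ _ fun n hn =>
    (natDegree_C_mul_le _ _).trans <| by
      simpa using Nat.add_le_add_right (le_natDegree_of_mem_supp n hn) 1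

noncomputable def primitive (a : ℝ) (p : ℝ[X]) : ℝ[X] :=
  antideriv p - C ((antideriv p).eval a)

theorem derivative_primitive (a : ℝ) (p : ℝ[X]) : derivative (primitive a p) = p := by
  simp [primitive, derivative_antideriv]

theorem natDegree_primitive_le (a : ℝ) (p : ℝ[X]) :
    (primitive a p).natDegree ≤ p.natDegree + 1 :=
  (natDegree_sub_le _ _).trans <| by
    simpa using natDegree_antideriv_le p

theorem integral_eval_derivative (p : ℝ[X]) (a b : ℝ) :
    ∫ t in a..b, (derivative p).eval t = p.eval b - p.eval a :=
  intervalIntegral.integral_eq_sub_of_hasDerivAt (fun x _ => p.hasDerivAt x)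
    ((derivative p).continuous.intervalIntegrable a b)

theorem eval_primitive (a : ℝ) (p : ℝ[X]) (x : ℝ) :
    (primitive a p).eval x = ∫ t in a..x, p.eval t := by
  conv_rhs => rw [← derivative_primitive a p]
  simp [integral_eval_derivative, primitive]

theorem eval_primitive_self (a : ℝ) (p : ℝ[X]) : (primitive a p).eval a = 0 := by
  simp [eval_primitive]

theorem integral_eval_primitive_mul (a b : ℝ) (p r : ℝ[X]) :
    ∫ t in a..b, (primitive b p * r).eval t = -∫ t in a..b, (p * primitive a r).eval t := by
  have hibp := integral_eval_derivative (primitive b p * primitive a r) a b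
  rw [derivative_mul, derivative_primitive, derivative_primitive, eval_mul, eval_mul,
    eval_primitive_self, eval_primitive_self, zero_mul, mul_zero, sub_zero] at hibp
  simp only [eval_add] at hibp
  rw [intervalIntegral.integral_add ((Polynomial.continuous _).intervalIntegrable _ _)
    ((Polynomial.continuous _).intervalIntegrable _ _)] at hibp
  linarith

end Polynomial

section Quadrature

variable {N : ℕ} {τ : Fin N → ℝ} {w : Fin N → ℝ}

theorem eval_lagL_self (hτ : Function.Injective τ) (i : Fin N) : (lagL τ i).eval (τ i) = 1 :=
  Lagrange.eval_basis_self hτ.injOn (Finset.mem_univ i)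

theorem eval_lagL_of_ne {i m : Fin N} (hmi : m ≠ i) : (lagL τ i).eval (τ m) = 0 :=
  Lagrange.eval_basis_of_ne hmi.symm (Finset.mem_univ m)

theorem natDegree_lagL (hτ : Function.Injective τ) (i : Fin N) :
    (lagL τ i).natDegree = N - 1 := by
  rw [lagL, Lagrange.natDegree_basis hτ.injOn (Finset.mem_univ i), Finset.card_univ,
    Fintype.card_fin]

theorem sum_mul_eval_mul_lagL (hτ : Function.Injective τ) (w : Fin N → ℝ) (P : ℝ[X])
    (i : Fin N) : ∑ m, w m * (P * lagL τ i).eval (τ m) = w i * P.eval (τ i) := by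
  rw [Fintype.sum_eq_single i fun m hmi => by rw [eval_mul, eval_lagL_of_ne hmi, mul_zero,
    mul_zero], eval_mul, eval_lagL_self hτ, mul_one]

theorem IsQuadrature.integral_mul_lagL (hτ : Function.Injective τ) (hq : IsQuadrature τ w)
    {P : ℝ[X]} (hP : P.natDegree ≤ N - 2) (i : Fin N) :
    ∫ t in (-1 : ℝ)..1, (P * lagL τ i).eval t = w i * P.eval (τ i) := by
  have hdeg : (P * lagL τ i).natDegree ≤ 2 * N - 3 :=
    natDegree_mul_le.trans (by rw [natDegree_lagL hτ]; omega)
  rw [← hq _ hdeg, sum_mul_eval_mul_lagL hτ]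

theorem IsQuadrature.integral_lagL (hτ : Function.Injective τ) (hq : IsQuadrature τ w)
    (i : Fin N) : ∫ t in (-1 : ℝ)..1, (lagL τ i).eval t = w i := by
  simpa using hq.integral_mul_lagL hτ (P := 1) (by simp) i

theorem natDegree_polyM_le (hτ : Function.Injective τ) {k : Fin N}
    (hk : 0 < (k : ℕ) ∧ (k : ℕ) < N - 1) : (polyM τ k).natDegree ≤ N - 3 := by
  have hcard : (Finset.univ.filter fun m : Fin N => 0 < (m : ℕ) ∧ (m : ℕ) < N - 1).card
      ≤ (Finset.Ioo 0 (N - 1)).card :=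
    Finset.card_le_card_of_injOn Fin.val (fun m hm => by simpa using hm)
      Fin.val_injective.injOn
  rw [Nat.card_Ioo] at hcard
  rw [polyM, Lagrange.natDegree_basis hτ.injOn (by simpa using hk)]
  omega

theorem eval_polyM_self (hτ : Function.Injective τ) {k : Fin N}
    (hk : 0 < (k : ℕ) ∧ (k : ℕ) < N - 1) : (polyM τ k).eval (τ k) = 1 :=
  Lagrange.eval_basis_self hτ.injOn (by simpa using hk)

theorem eval_polyM_of_ne {k m : Fin N} (hm : 0 < (m : ℕ) ∧ (m : ℕ) < N - 1) (hmk : m ≠ k) :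
    (polyM τ k).eval (τ m) = 0 :=
  Lagrange.eval_basis_of_ne hmk.symm (by simpa using hm)

theorem IsQuadrature.mul_integral_polyM (hτ : Function.Injective τ) (hq : IsQuadrature τ w)
    {k : Fin N} (hk : 0 < (k : ℕ) ∧ (k : ℕ) < N - 1) (h0 : τ ⟨0, k.pos⟩ = -1)
    (h1 : τ ⟨N - 1, Nat.sub_one_lt_of_lt k.isLt⟩ = 1) (i : Fin N) :
    w i * ∫ t in (τ i)..1, (polyM τ k).eval t =
      w k * (∫ t in (-1 : ℝ)..(τ k), (lagL τ i).eval t)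
        + w ⟨N - 1, Nat.sub_one_lt_of_lt k.isLt⟩ * (polyM τ k).eval 1 * w i := by
  set M := polyM τ k
  set q := primitive (-1) (lagL τ i)
  set last : Fin N := ⟨N - 1, Nat.sub_one_lt_of_lt k.isLt⟩
  have hMdeg : M.natDegree ≤ N - 3 := natDegree_polyM_le hτ hk
  have hqdeg : q.natDegree ≤ N := (natDegree_primitive_le _ _).trans (by
    rw [natDegree_lagL hτ]; omega)
  have hklast : k ≠ last := Fin.ne_of_val_ne (show (k : ℕ) ≠ N - 1 by omega)
  have hvanish : ∀ m, m ≠ k ∧ m ≠ last → w m * (M * q).eval (τ m) = 0 := by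
    rintro m ⟨hmk, hml⟩
    by_cases hm0 : (m : ℕ) = 0
    · rw [show m = ⟨0, k.pos⟩ from Fin.ext hm0, eval_mul, h0, eval_primitive_self, mul_zero,
        mul_zero]
    · have hml' : (m : ℕ) ≠ N - 1 := fun h => hml (Fin.ext h)
      rw [eval_mul, eval_polyM_of_ne (by omega) hmk, zero_mul, mul_zero]
  calc w i * ∫ t in (τ i)..1, M.eval t
      = -(w i * (primitive 1 M).eval (τ i)) := by
        rw [eval_primitive, intervalIntegral.integral_symm, mul_neg]
    _ = -∫ t in (-1 : ℝ)..1, (primitive 1 M * lagL τ i).eval t := by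
        rw [hq.integral_mul_lagL hτ ((natDegree_primitive_le _ _).trans (by omega))]
    _ = ∑ m, w m * (M * q).eval (τ m) := by
        rw [integral_eval_primitive_mul, neg_neg, hq _ (natDegree_mul_le.trans (by omega))]
    _ = w k * (∫ t in (-1 : ℝ)..(τ k), (lagL τ i).eval t) + w last * M.eval 1 * w i := by
        rw [Fintype.sum_eq_add k last hklast hvanish, eval_mul, eval_mul,
          eval_polyM_self hτ hk, h1, eval_primitive, eval_primitive, hq.integral_lagL hτ]
        ring

end Quadrature

/-- The entries of the adjoint integration matrix `A†`: for interior columns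
(paper indices `j = 2, …, N-1`, here `(j : ℕ) < N - 2`, node `τ (j+1)`),
`A†ᵢⱼ = ∫_{τᵢ}^{1} M_j(t) dt - w_N M_j(1)`, and the last column is constantly `w_N`. -/
theorem stmt6 (N : ℕ) (hN : 3 ≤ N) (τ : Fin N → ℝ) (hmono : StrictMono τ)
    (h0 : τ ⟨0, by omega⟩ = -1) (h1 : τ ⟨N - 1, by omega⟩ = 1) (w : Fin N → ℝ) (hw : ∀ i, 0 < w i) (hquad : IsQuadrature τ w) :
    (∀ i : Fin N, ∀ j : Fin (N - 1), (j : ℕ) < N - 2 →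
      matAdag τ w i j =
        (∫ t in (τ i)..(1 : ℝ), (polyM τ ⟨(j : ℕ) + 1, by have := j.isLt; omega⟩).eval t)
          - w ⟨N - 1, by omega⟩ * (polyM τ ⟨(j : ℕ) + 1, by have := j.isLt; omega⟩).eval 1) ∧
    (∀ i : Fin N, matAdag τ w i ⟨N - 2, by omega⟩ = w ⟨N - 1, by omega⟩) := by
  have hτ := hmono.injective
  refine ⟨fun i j hj => ?_, fun i => ?_⟩
  · have key := hquad.mul_integral_polyM hτ (k := ⟨(j : ℕ) + 1, by omega⟩)
      ⟨Nat.succ_pos _, by simp only; omega⟩ h0 h1 i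
    rw [matAdag, matA, eq_sub_iff_add_eq, ← mul_right_inj' (hw i).ne', key]
    field_simp [(hw i).ne']
  · have hlast : (⟨N - 2 + 1, by omega⟩ : Fin N) = ⟨N - 1, by omega⟩ := Fin.ext (by simp; omega)
    simp only [matAdag, matA, hlast, h1, hquad.integral_lagL hτ, inv_mul_cancel₀ (hw i).ne',
      one_mul]
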